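/- arXiv:1810.02544 — 4 statements merged into one kernel-verified Lean document; each statement's English description precedes it below -/
import Mathlib

section
/- Let S be an open square in the complex plane with center 0 and side length 1 (diameter √2). For any two distinct points z, z' in S, let Γ be the open disk centered at z passing through z' (i.e., of radius |z−z'|). Then there exists an open disk Γ' of radius at least (1/5)·|z−z'| contained in Γ ∩ S. -/
/-!
Put `ρ = ‖z - z'‖ / 5`; two points of the square are less than `2` apart, so `ρ ≤ 1/2`.
Clamping each coordinate of `z` into `[-(1/2 - ρ), 1/2 - ρ]` moves it by at most `ρ` and gives
a center `c` with `ball c ρ ⊆ S` and `‖c - z‖ ≤ 2ρ`, hence also `ball c ρ ⊆ ball z (5ρ)`.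
-/

/-- The open unit square centered at 0 in ℂ. -/
def unitSquare : Set ℂ := {z : ℂ | |z.re| < 1/2 ∧ |z.im| < 1/2}

lemma exists_abs_le_sub_of_abs_le {x a ρ : ℝ} (hx : |x| ≤ a) (hρ : 0 ≤ ρ) (hρa : ρ ≤ a) :
    ∃ y, |y| ≤ a - ρ ∧ |y - x| ≤ ρ := by
  rw [abs_le] at hx
  set y := max (-(a - ρ)) (min x (a - ρ))
  refine ⟨y, abs_le.2 ⟨le_max_left _ _, max_le (by linarith) (min_le_right _ _)⟩,
    abs_le.2 ⟨?_, ?_⟩⟩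
  · have : x - ρ ≤ min x (a - ρ) := le_min (by linarith) (by linarith)
    linarith [le_max_right (-(a - ρ)) (min x (a - ρ))]
  · rw [sub_le_iff_le_add]
    exact max_le (by linarith) ((min_le_left _ _).trans (by linarith))

lemma ball_subset_unitSquare {c : ℂ} {r : ℝ} (hre : |c.re| ≤ 1/2 - r) (him : |c.im| ≤ 1/2 - r) :
    Metric.ball c r ⊆ unitSquare := by
  intro w hw
  have hwc : ‖w - c‖ < r := by rwa [Metric.mem_ball, Complex.dist_eq] at hw
  have hre' : |w.re| ≤ |(w - c).re| + |c.re| := by simpa using abs_add_le (w - c).re c.re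
  have him' : |w.im| ≤ |(w - c).im| + |c.im| := by simpa using abs_add_le (w - c).im c.im
  have := Complex.abs_re_le_norm (w - c)
  have := Complex.abs_im_le_norm (w - c)
  exact ⟨by linarith, by linarith⟩

lemma exists_ball_subset_unitSquare_near {z : ℂ} (hz : z ∈ unitSquare) {ρ : ℝ} (hρ : 0 ≤ ρ)
    (hρ' : ρ ≤ 1/2) : ∃ c, Metric.ball c ρ ⊆ unitSquare ∧ ‖c - z‖ ≤ 2 * ρ := by
  obtain ⟨x, hx, hxz⟩ := exists_abs_le_sub_of_abs_le hz.1.le hρ hρ'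
  obtain ⟨y, hy, hyz⟩ := exists_abs_le_sub_of_abs_le hz.2.le hρ hρ'
  refine ⟨⟨x, y⟩, ball_subset_unitSquare hx hy, ?_⟩
  calc ‖(⟨x, y⟩ : ℂ) - z‖ ≤ |x - z.re| + |y - z.im| := Complex.norm_le_abs_re_add_abs_im _
    _ ≤ 2 * ρ := by linarith

lemma norm_sub_lt_two_of_mem_unitSquare {z z' : ℂ} (hz : z ∈ unitSquare)
    (hz' : z' ∈ unitSquare) : ‖z - z'‖ < 2 := by
  have hre : |(z - z').re| < 1 := by
    simpa using (abs_sub _ _).trans_lt (by linarith [hz.1, hz'.1] : |z.re| + |z'.re| < 1)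
  have him : |(z - z').im| < 1 := by
    simpa using (abs_sub _ _).trans_lt (by linarith [hz.2, hz'.2] : |z.im| + |z'.im| < 1)
  linarith [Complex.norm_le_abs_re_add_abs_im (z - z')]

theorem disk_in_square_inter_general (z z' : ℂ) (hz : z ∈ unitSquare) (hz' : z' ∈ unitSquare) :
    ∃ (c : ℂ) (r : ℝ), (1/5) * ‖z - z'‖ ≤ r ∧
      Metric.ball c r ⊆ Metric.ball z (‖z - z'‖) ∩ unitSquare := by
  set d := ‖z - z'‖
  have hd : d < 2 := norm_sub_lt_two_of_mem_unitSquare hz hz'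
  obtain ⟨c, hc, hcz⟩ :=
    exists_ball_subset_unitSquare_near hz (ρ := d / 5) (by positivity) (by linarith)
  refine ⟨c, d / 5, by linarith, Set.subset_inter (Metric.ball_subset_ball' ?_) hc⟩
  rw [Complex.dist_eq]
  linarith [norm_nonneg (z - z')]

/-- For distinct points `z, z'` of the unit square, the disk centered at `z` through `z'`
meets the square in a disk of radius at least `|z - z'| / 5`. -/
theorem disk_in_square_inter (z z' : ℂ) (hz : z ∈ unitSquare) (hz' : z' ∈ unitSquare)
    (hne : z ≠ z') :
    ∃ (c : ℂ) (r : ℝ), (1/5) * ‖z - z'‖ ≤ r ∧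
      Metric.ball c r ⊆ Metric.ball z (‖z - z'‖) ∩ unitSquare :=
  disk_in_square_inter_general z z' hz hz'
end

section
/- If z and z' are points of the square S of side 1 centered at 0 with |z−z'| ≤ 1/2, then the intersection of S with the disk Γ of center z and radius |z−z'| contains one of the four closed quarter-disks of Γ (a quarter disk determined by the two coordinate axes through z). -/
/-! Take the quarter of `Γ` that points from `z` towards the centre `0` of the square: its points
differ from `z` by less than `1/2` in each coordinate, and in the direction of `0`, so each
coordinate stays in `(-1/2, 1/2)`. -/

noncomputable def signTowardZero (a : ℝ) : ℝ := if 0 ≤ a then -1 else 1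

lemma signTowardZero_eq_one_or_neg_one (a : ℝ) :
    signTowardZero a = 1 ∨ signTowardZero a = -1 := by
  unfold signTowardZero
  split_ifs <;> simp

lemma abs_add_lt_of_signTowardZero_mul_nonneg {a d c : ℝ} (ha : |a| < c) (hd : |d| < c)
    (hdir : 0 ≤ signTowardZero a * d) : |a + d| < c := by
  rw [abs_lt] at ha hd ⊢
  unfold signTowardZero at hdir
  constructor <;> split_ifs at hdir <;> linarith

lemma mem_unitSquare_of_signTowardZero {z w : ℂ} (hz : z ∈ unitSquare) (hwz : ‖w - z‖ < 1/2)
    (hre : 0 ≤ signTowardZero z.re * (w - z).re) (him : 0 ≤ signTowardZero z.im * (w - z).im) :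
    w ∈ unitSquare := by
  have hw : w = z + (w - z) := by ring
  rw [hw]
  exact ⟨abs_add_lt_of_signTowardZero_mul_nonneg hz.1
      ((Complex.abs_re_le_norm _).trans_lt hwz) hre,
    abs_add_lt_of_signTowardZero_mul_nonneg hz.2
      ((Complex.abs_im_le_norm _).trans_lt hwz) him⟩

theorem square_contains_quarter_disk_general (z z' : ℂ) (hz : z ∈ unitSquare)
    (h : ‖z - z'‖ ≤ 1/2) :
    ∃ ε₁ ε₂ : ℝ, (ε₁ = 1 ∨ ε₁ = -1) ∧ (ε₂ = 1 ∨ ε₂ = -1) ∧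
      {w : ℂ | w ∈ Metric.ball z (‖z - z'‖) ∧
          0 ≤ ε₁ * (w - z).re ∧ 0 ≤ ε₂ * (w - z).im} ⊆
        Metric.ball z (‖z - z'‖) ∩ unitSquare := by
  refine ⟨signTowardZero z.re, signTowardZero z.im, signTowardZero_eq_one_or_neg_one _,
    signTowardZero_eq_one_or_neg_one _, ?_⟩
  rintro w ⟨hw, hre, him⟩
  have hwz : ‖w - z‖ < 1/2 := (mem_ball_iff_norm.mp hw).trans_le h
  exact ⟨hw, mem_unitSquare_of_signTowardZero hz hwz hre him⟩

/-- If `z, z'` lie in the unit square with `|z - z'| ≤ 1/2`, then `S ∩ Γ`, where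
`Γ` is the disk of center `z` and radius `|z - z'|`, contains one of the four closed
quarter-disks of `Γ` determined by the two coordinate axes through `z`. -/
theorem square_contains_quarter_disk (z z' : ℂ) (hz : z ∈ unitSquare)
    (hz' : z' ∈ unitSquare) (h : ‖z - z'‖ ≤ 1/2) :
    ∃ ε₁ ε₂ : ℝ, (ε₁ = 1 ∨ ε₁ = -1) ∧ (ε₂ = 1 ∨ ε₂ = -1) ∧
      {w : ℂ | w ∈ Metric.ball z (‖z - z'‖) ∧
          0 ≤ ε₁ * (w - z).re ∧ 0 ≤ ε₂ * (w - z).im} ⊆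
        Metric.ball z (‖z - z'‖) ∩ unitSquare :=
  square_contains_quarter_disk_general z z' hz h
end

section
/- Let f be injective holomorphic on an open set containing the closure of a convex open set S ⊂ ℂ, and suppose |f'(z)|/|f'(z')| ≤ D for all z, z' in the closure of S. Then for any disk of diameter d contained in S, its image under f contains a disk of diameter at least (1/D)·|f'(c)|·d, where c is any point of the closure of S; and the image of S is contained in a set of diameter at most D·|f'(c)|·diam(S). -/
/-!
The diameter bound is the mean value inequality on the convex set `S`, where
`‖f'‖ ≤ D ‖f'(c)‖`. For a disk `B = ball c₀ r ⊆ S` we have `‖f'‖ ≥ m := ‖f'(c)‖ / D` on `B`, so the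
inverse `g` of `f` is `m⁻¹`-Lipschitz on every disk `ball (f c₀) ρ ⊆ f '' B`. If `ρ < m r`, that
disk lies in the compact set `f '' closedBall c₀ (ρ / m) ⊆ f '' B`, hence so does its closure;
therefore the largest disk about `f c₀` inside the open set `f '' B` has radius at least `m r`.
-/

open Metric Set Filter Function

theorem Metric.ball_subset_of_forall_closedBall_subset {α : Type*} [PseudoMetricSpace α]
    [ProperSpace α] {V : Set α} {x : α} {R : ℝ} (hV : IsOpen V) (hx : x ∈ V)
    (h : ∀ ρ, 0 < ρ → ρ < R → ball x ρ ⊆ V → closedBall x ρ ⊆ V) : ball x R ⊆ V := by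
  by_contra hR
  rcases Vᶜ.eq_empty_or_nonempty with hempty | hne
  · exact hR (by simp [compl_empty_iff.1 hempty])
  set ρ := infDist x Vᶜ
  have hρ : 0 < ρ := (hV.isClosed_compl.notMem_iff_infDist_pos hne).1 (not_not.2 hx)
  have hρR : ρ < R :=
    not_le.1 fun hle => hR ((ball_subset_ball hle).trans ball_infDist_compl_subset)
  obtain ⟨w, hw, hdist⟩ := hV.isClosed_compl.exists_infDist_eq_dist hne x
  exact hw (h ρ hρ hρR ball_infDist_compl_subset (by rw [mem_closedBall, dist_comm, ← hdist]))

section InverseFunction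

variable {𝕜 : Type*} [NontriviallyNormedField 𝕜] [CompleteSpace 𝕜] {f : 𝕜 → 𝕜} {f' : 𝕜 → 𝕜}
  {U : Set 𝕜}

theorem HasStrictDerivAt.invFunOn {a f'a : 𝕜} (hU : IsOpen U) (hinj : InjOn f U) (ha : a ∈ U)
    (hf : HasStrictDerivAt f f'a a) (hf'a : f'a ≠ 0) :
    HasStrictDerivAt (invFunOn f U) f'a⁻¹ (f a) :=
  hf.to_local_left_inverse hf'a <|
    eventually_of_mem (hU.mem_nhds ha) fun _ hx => hinj.leftInvOn_invFunOn hx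

theorem IsOpen.image_of_hasStrictDerivAt (hU : IsOpen U)
    (hf : ∀ x ∈ U, HasStrictDerivAt f (f' x) x) (hf' : ∀ x ∈ U, f' x ≠ 0) : IsOpen (f '' U) :=
  isOpen_iff_mem_nhds.2 <| forall_mem_image.2 fun x hx =>
    (hf x hx).map_nhds_eq (hf' x hx) ▸ image_mem_map (hU.mem_nhds hx)

end InverseFunction

theorem ball_mul_subset_image_ball {𝕜 : Type*} [RCLike 𝕜] {f f' : 𝕜 → 𝕜} {c : 𝕜} {r m : ℝ}
    (hr : 0 < r) (hm : 0 < m) (hinj : InjOn f (ball c r))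
    (hf : ∀ z ∈ ball c r, HasStrictDerivAt f (f' z) z) (hf'm : ∀ z ∈ ball c r, m ≤ ‖f' z‖) :
    ball (f c) (m * r) ⊆ f '' ball c r := by
  set g := invFunOn f (ball c r)
  have hgf : ∀ z ∈ ball c r, g (f z) = z := fun z hz => hinj.leftInvOn_invFunOn hz
  have hf'0 : ∀ z ∈ ball c r, f' z ≠ 0 := fun z hz => norm_pos_iff.1 (hm.trans_le (hf'm z hz))
  have hg : ∀ w ∈ f '' ball c r, HasDerivAt g (f' (g w))⁻¹ w ∧ g w ∈ ball c r := by
    rintro _ ⟨z, hz, rfl⟩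
    rw [hgf z hz]
    exact ⟨((hf z hz).invFunOn isOpen_ball hinj hz (hf'0 z hz)).hasDerivAt, hz⟩
  refine ball_subset_of_forall_closedBall_subset (isOpen_ball.image_of_hasStrictDerivAt hf hf'0)
    (mem_image_of_mem f (mem_ball_self hr)) fun ρ hρ hρr hball => ?_
  have hK : closedBall c (ρ / m) ⊆ ball c r :=
    closedBall_subset_ball (by rwa [div_lt_iff₀' hm])
  have hg_maps : ∀ w ∈ ball (f c) ρ, g w ∈ closedBall c (ρ / m) := fun w hw => by
    have hlip := (convex_ball _ _).norm_image_sub_le_of_norm_hasDerivWithin_le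
      (fun v hv => (hg v (hball hv)).1.hasDerivWithinAt)
      (fun v hv => by
        rw [norm_inv]
        exact inv_anti₀ hm (hf'm _ (hg v (hball hv)).2))
      (mem_ball_self hρ) hw
    rw [hgf c (mem_ball_self hr), ← dist_eq_norm, ← dist_eq_norm] at hlip
    rw [mem_closedBall, div_eq_inv_mul]
    exact hlip.trans (mul_le_mul_of_nonneg_left (mem_ball.1 hw).le (inv_nonneg.2 hm.le))
  have hsub : ball (f c) ρ ⊆ f '' closedBall c (ρ / m) :=
    fun w hw => ⟨g w, hg_maps w hw, invFunOn_eq (hball hw)⟩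
  have hfK : IsCompact (f '' closedBall c (ρ / m)) :=
    (isCompact_closedBall _ _).image_of_continuousOn
      fun z hz => (hf z (hK hz)).hasDerivAt.continuousAt.continuousWithinAt
  calc closedBall (f c) ρ = closure (ball (f c) ρ) := (closure_ball _ hρ.ne').symm
    _ ⊆ f '' closedBall c (ρ / m) := closure_minimal hsub hfK.isClosed
    _ ⊆ f '' ball c r := image_mono hK

theorem Convex.diam_image_le_of_norm_deriv_le {𝕜 E : Type*} [RCLike 𝕜] [NormedAddCommGroup E]
    [NormedSpace 𝕜 E] {f : 𝕜 → E} {s : Set 𝕜} {C : ℝ} (hs : Convex ℝ s)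
    (hbdd : Bornology.IsBounded s) (hC : 0 ≤ C) (hf : ∀ x ∈ s, DifferentiableAt 𝕜 f x)
    (bound : ∀ x ∈ s, ‖deriv f x‖ ≤ C) : diam (f '' s) ≤ C * diam s :=
  diam_le_of_forall_dist_le (by positivity) <| forall_mem_image.2 fun x hx =>
    forall_mem_image.2 fun y hy => calc
      dist (f x) (f y) = ‖f x - f y‖ := dist_eq_norm _ _
      _ ≤ C * ‖x - y‖ := hs.norm_image_sub_le_of_norm_deriv_le hf bound hy hx
      _ ≤ C * diam s := by
        gcongr
        exact dist_eq_norm x y ▸ dist_le_diam_of_mem hbdd hx hy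

theorem DifferentiableOn.hasStrictDerivAt_of_isOpen {f : ℂ → ℂ} {U : Set ℂ}
    (hf : DifferentiableOn ℂ f U) (hU : IsOpen U) {z : ℂ} (hz : z ∈ U) :
    HasStrictDerivAt f (_root_.deriv f z) z :=
  (hf.analyticAt (hU.mem_nhds hz)).hasStrictDerivAt

theorem distortion_image_disk_general (S : Set ℂ) (hSconv : Convex ℝ S)
    (hSbdd : Bornology.IsBounded S) (U : Set ℂ) (hU : IsOpen U) (hSU : closure S ⊆ U)
    (f : ℂ → ℂ) (hf : DifferentiableOn ℂ f U) (hinj : Set.InjOn f U)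
    (D : ℝ) (hD : 1 ≤ D)
    (hdist : ∀ z ∈ closure S, ∀ z' ∈ closure S, ‖deriv f z‖ ≤ D * ‖deriv f z'‖)
    (c : ℂ) (hc : c ∈ closure S) :
    (∀ (c₀ : ℂ) (d : ℝ), 0 < d → Metric.ball c₀ (d/2) ⊆ S →
      ∃ c₁ : ℂ, Metric.ball c₁ ((1/D) * ‖deriv f c‖ * d / 2) ⊆ f '' Metric.ball c₀ (d/2)) ∧
    Metric.diam (f '' S) ≤ D * ‖deriv f c‖ * Metric.diam S := by
  have hSU' : S ⊆ U := subset_closure.trans hSU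
  have hD0 : 0 < D := one_pos.trans_le hD
  constructor
  · intro c₀ d hd hball
    rcases (norm_nonneg (deriv f c)).eq_or_lt with h0 | hpos
    · exact ⟨0, by simp [← h0]⟩
    refine ⟨f c₀, ?_⟩
    convert ball_mul_subset_image_ball (half_pos hd) (div_pos hpos hD0)
      (hinj.mono (hball.trans hSU'))
      (fun z hz => hf.hasStrictDerivAt_of_isOpen hU (hSU' (hball hz)))
      (fun z hz => (div_le_iff₀' hD0).2
        (hdist c hc z (subset_closure (hball hz)))) using 2
    ring
  · exact hSconv.diam_image_le_of_norm_deriv_le hSbdd (by positivity)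
      (fun z hz => hf.differentiableAt (hU.mem_nhds (hSU' hz)))
      (fun z hz => hdist z (subset_closure hz) c hc)

/-- Distortion estimates for images of disks under a univalent map of bounded distortion:
if `f` is injective holomorphic on an open set containing the closure of a bounded convex
open set `S`, with `|f'(z)|/|f'(z')| ≤ D` on `cl S`, then the image of any disk of diameter
`d` contained in `S` contains a disk of diameter at least `(1/D)·|f'(c)|·d`, and the image
of `S` has diameter at most `D·|f'(c)|·diam S`, for any `c` in the closure of `S`. -/
theorem distortion_image_disk (S : Set ℂ) (hSopen : IsOpen S) (hSconv : Convex ℝ S)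
    (hSbdd : Bornology.IsBounded S) (U : Set ℂ) (hU : IsOpen U) (hSU : closure S ⊆ U)
    (f : ℂ → ℂ) (hf : DifferentiableOn ℂ f U) (hinj : Set.InjOn f U)
    (D : ℝ) (hD : 1 ≤ D)
    (hdist : ∀ z ∈ closure S, ∀ z' ∈ closure S, ‖deriv f z‖ ≤ D * ‖deriv f z'‖)
    (c : ℂ) (hc : c ∈ closure S) :
    (∀ (c₀ : ℂ) (d : ℝ), 0 < d → Metric.ball c₀ (d/2) ⊆ S →
      ∃ c₁ : ℂ, Metric.ball c₁ ((1/D) * ‖deriv f c‖ * d / 2) ⊆ f '' Metric.ball c₀ (d/2)) ∧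
    Metric.diam (f '' S) ≤ D * ‖deriv f c‖ * Metric.diam S :=
  distortion_image_disk_general S hSconv hSbdd U hU hSU f hf hinj D hD hdist c hc
end

section
/- (Newhouse Gap Lemma, one dimension) Let K, L ⊂ ℝ be Cantor sets with τ(K)·τ(L) ≥ 1. Then either K is contained in a single gap of L, or L is contained in a single gap of K, or K ∩ L ≠ ∅. -/
/-- A Cantor set in ℝ: nonempty, compact, perfect, totally disconnected. -/
def IsCantorSet (K : Set ℝ) : Prop :=
  K.Nonempty ∧ IsCompact K ∧ Perfect K ∧ IsTotallyDisconnected K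

/-- A gap of `K` is a connected component of its complement (possibly unbounded). -/
def IsGap (K I : Set ℝ) : Prop := ∃ x ∉ K, I = connectedComponentIn Kᶜ x

/-- Distance between two sets of reals. -/
noncomputable def setDist (A B : Set ℝ) : ℝ :=
  sInf {r : ℝ | ∃ x ∈ A, ∃ y ∈ B, r = dist x y}

/-- The length of the shortest interval between the gap `I` and another gap of length at
least that of `I` (unbounded complementary components qualifying automatically). -/
noncomputable def bridgeLength (K I : Set ℝ) : ℝ :=
  sInf {r : ℝ | ∃ J, IsGap K J ∧ J ≠ I ∧
    (¬ Bornology.IsBounded J ∨ Metric.diam I ≤ Metric.diam J) ∧ r = setDist I J}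

/-- The Newhouse thickness of `K`. -/
noncomputable def thickness (K : Set ℝ) : ℝ :=
  sInf {t : ℝ | ∃ I, IsGap K I ∧ Bornology.IsBounded I ∧ I.Nonempty ∧
    t = bridgeLength K I / Metric.diam I}

open Set Filter Topology


lemma setDist_nonneg (A B : Set ℝ) : 0 ≤ setDist A B :=
  Real.sInf_nonneg (by rintro r ⟨x, _, y, _, rfl⟩; exact dist_nonneg)

lemma setDist_le {A B : Set ℝ} {x y : ℝ} (hx : x ∈ A) (hy : y ∈ B) :
    setDist A B ≤ dist x y :=
  csInf_le ⟨0, by rintro r ⟨a, _, b, _, rfl⟩; exact dist_nonneg⟩ ⟨x, hx, y, hy, rfl⟩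

lemma bridgeLength_nonneg (K I : Set ℝ) : 0 ≤ bridgeLength K I :=
  Real.sInf_nonneg (by rintro r ⟨J, _, _, _, rfl⟩; exact setDist_nonneg _ _)

lemma thickness_nonneg (K : Set ℝ) : 0 ≤ thickness K :=
  Real.sInf_nonneg (by rintro t ⟨I, _, _, _, rfl⟩; exact div_nonneg (bridgeLength_nonneg _ _) Metric.diam_nonneg)

lemma bridgeLength_le {K I J : Set ℝ} (hJ : IsGap K J) (hne : J ≠ I)
    (hqual : ¬ Bornology.IsBounded J ∨ Metric.diam I ≤ Metric.diam J) :
    bridgeLength K I ≤ setDist I J :=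
  csInf_le ⟨0, by rintro r ⟨J', _, _, _, rfl⟩; exact setDist_nonneg _ _⟩
    ⟨J, hJ, hne, hqual, rfl⟩

lemma thickness_le {K I : Set ℝ} (hI : IsGap K I) (hb : Bornology.IsBounded I)
    (hne : I.Nonempty) : thickness K ≤ bridgeLength K I / Metric.diam I :=
  csInf_le ⟨0, by rintro t ⟨I', _, _, _, rfl⟩; exact div_nonneg (bridgeLength_nonneg _ _) Metric.diam_nonneg⟩
    ⟨I, hI, hb, hne, rfl⟩

lemma setDist_le_of_forall {S T : Set ℝ} {c : ℝ}
    (h : ∀ ε, 0 < ε → ∃ x ∈ S, ∃ y ∈ T, dist x y ≤ c + ε) : setDist S T ≤ c := by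
  by_contra hc
  push_neg at hc
  obtain ⟨x, hx, y, hy, hxy⟩ := h ((setDist S T - c) / 2) (by linarith)
  have := setDist_le hx hy
  linarith

section Comp
variable {A : Set ℝ} {x : ℝ}

lemma comp_eq (hA : IsClosed A) (hx : x ∉ A)
    (h1 : (A ∩ Iic x).Nonempty) (h2 : (A ∩ Ici x).Nonempty) :
    sSup (A ∩ Iic x) ∈ A ∧ sInf (A ∩ Ici x) ∈ A ∧
    sSup (A ∩ Iic x) < x ∧ x < sInf (A ∩ Ici x) ∧
    connectedComponentIn Aᶜ x = Ioo (sSup (A ∩ Iic x)) (sInf (A ∩ Ici x)) := by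
  set P := sSup (A ∩ Iic x) with hPdef
  set Q := sInf (A ∩ Ici x) with hQdef
  have hbddA : BddAbove (A ∩ Iic x) := ⟨x, fun y hy => hy.2⟩
  have hbddB : BddBelow (A ∩ Ici x) := ⟨x, fun y hy => hy.2⟩
  have hPmem : P ∈ A ∩ Iic x := (hA.inter isClosed_Iic).csSup_mem h1 hbddA
  have hQmem : Q ∈ A ∩ Ici x := (hA.inter isClosed_Ici).csInf_mem h2 hbddB
  have hPx : P < x := hPmem.2.lt_of_ne (by intro h; exact hx (h ▸ hPmem.1))
  have hxQ : x < Q := (le_csInf h2 fun y hy => hy.2).lt_of_ne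
    (by intro h; exact hx (h ▸ hQmem.1))
  have hsub : Ioo P Q ⊆ Aᶜ := by
    intro a ha hmem
    rcases le_total a x with hax | hax
    · exact absurd (le_csSup hbddA ⟨hmem, hax⟩) (not_le.2 ha.1)
    · exact absurd (csInf_le hbddB ⟨hmem, hax⟩) (not_le.2 ha.2)
  have hxIoo : x ∈ Ioo P Q := ⟨hPx, hxQ⟩
  refine ⟨hPmem.1, hQmem.1, hPx, hxQ, ?_⟩
  apply Subset.antisymm
  · intro y hy
    have hyc : y ∈ Aᶜ := connectedComponentIn_subset _ _ hy
    have hoc : OrdConnected (connectedComponentIn Aᶜ x) :=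
      isPreconnected_connectedComponentIn.ordConnected
    have hxc : x ∈ connectedComponentIn Aᶜ x := mem_connectedComponentIn hx
    constructor
    · by_contra hc
      push_neg at hc
      have : P ∈ Icc y x := ⟨hc, hPx.le⟩
      have := hoc.out hy hxc this
      exact (connectedComponentIn_subset _ _ this) hPmem.1
    · by_contra hc
      push_neg at hc
      have : Q ∈ Icc x y := ⟨hxQ.le, hc⟩
      have := hoc.out hxc hy this
      exact (connectedComponentIn_subset _ _ this) hQmem.1
  · exact isPreconnected_Ioo.subset_connectedComponentIn hxIoo hsub

lemma comp_unbdd_right (hA : IsClosed A) (hx : x ∉ A)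
    (h1 : (A ∩ Iic x).Nonempty) (h2 : A ∩ Ici x = ∅) :
    sSup (A ∩ Iic x) ∈ A ∧ sSup (A ∩ Iic x) < x ∧
    Ioi (sSup (A ∩ Iic x)) ⊆ connectedComponentIn Aᶜ x := by
  set P := sSup (A ∩ Iic x) with hPdef
  have hbddA : BddAbove (A ∩ Iic x) := ⟨x, fun y hy => hy.2⟩
  have hPmem : P ∈ A ∩ Iic x := (hA.inter isClosed_Iic).csSup_mem h1 hbddA
  have hPx : P < x := hPmem.2.lt_of_ne (by intro h; exact hx (h ▸ hPmem.1))
  have hsub : Ioi P ⊆ Aᶜ := by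
    intro a ha hmem
    rcases le_total a x with hax | hax
    · exact absurd (le_csSup hbddA ⟨hmem, hax⟩) (not_le.2 ha)
    · have : a ∈ A ∩ Ici x := ⟨hmem, hax⟩
      rw [h2] at this; exact this
  exact ⟨hPmem.1, hPx, isPreconnected_Ioi.subset_connectedComponentIn hPx hsub⟩

lemma comp_unbdd_left (hA : IsClosed A) (hx : x ∉ A)
    (h2 : (A ∩ Ici x).Nonempty) (h1 : A ∩ Iic x = ∅) :
    sInf (A ∩ Ici x) ∈ A ∧ x < sInf (A ∩ Ici x) ∧
    Iio (sInf (A ∩ Ici x)) ⊆ connectedComponentIn Aᶜ x := by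
  set Q := sInf (A ∩ Ici x) with hQdef
  have hbddB : BddBelow (A ∩ Ici x) := ⟨x, fun y hy => hy.2⟩
  have hQmem : Q ∈ A ∩ Ici x := (hA.inter isClosed_Ici).csInf_mem h2 hbddB
  have hxQ : x < Q := (le_csInf h2 fun y hy => hy.2).lt_of_ne
    (by intro h; exact hx (h ▸ hQmem.1))
  have hsub : Iio Q ⊆ Aᶜ := by
    intro a ha hmem
    rcases le_total x a with hax | hax
    · exact absurd (csInf_le hbddB ⟨hmem, hax⟩) (not_le.2 ha)
    · have : a ∈ A ∩ Iic x := ⟨hmem, hax⟩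
      rw [h1] at this; exact this
  exact ⟨hQmem.1, hxQ, isPreconnected_Iio.subset_connectedComponentIn hxQ hsub⟩

end Comp

lemma gap_disjoint {A I J : Set ℝ} (hI : IsGap A I) (hJ : IsGap A J) (hne : I ≠ J) :
    ∀ z, z ∈ I → z ∉ J := by
  obtain ⟨x, hx, rfl⟩ := hI
  obtain ⟨y, hy, rfl⟩ := hJ
  intro z hzI hzJ
  exact hne ((connectedComponentIn_eq hzI).trans (connectedComponentIn_eq hzJ).symm)

lemma Ioo_eq_iff {a b c d : ℝ} (hab : a < b) (h : Ioo a b = Ioo c d) : a = c ∧ b = d := by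
  have hcd : c < d := by
    by_contra hc
    rw [Ioo_eq_empty hc] at h
    exact (Set.nonempty_Ioo.2 hab).ne_empty h
  constructor
  · rw [← csInf_Ioo hab, ← csInf_Ioo hcd, h]
  · rw [← csSup_Ioo hab, ← csSup_Ioo hcd, h]

lemma gap_sep {A : Set ℝ} {a b c d κ : ℝ} (h1 : IsGap A (Ioo a b)) (h2 : IsGap A (Ioo c d))
    (hab : a < b) (hcd : c < d) (hne : Ioo a b ≠ Ioo c d)
    (hκ1 : κ ≤ b - a) (hκ2 : κ ≤ d - c) : κ ≤ |a - c| := by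
  have hdisj := gap_disjoint h1 h2 hne
  rcases lt_trichotomy a c with hac | hac | hac
  · -- a < c : show b ≤ c
    have hbc : b ≤ c := by
      by_contra hc
      push_neg at hc
      have hz : (c + min b d) / 2 ∈ Ioo a b := by
        rcases le_total b d with h | h
        · rw [min_eq_left h]; constructor <;> linarith
        · rw [min_eq_right h]; constructor <;> linarith
      have hz' : (c + min b d) / 2 ∈ Ioo c d := by
        rcases le_total b d with h | h
        · rw [min_eq_left h]; constructor <;> linarith
        · rw [min_eq_right h]; constructor <;> linarith
      exact hdisj _ hz hz'
    rw [abs_of_neg (by linarith)]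
    linarith
  · exfalso
    subst hac
    have hz : (a + min b d) / 2 ∈ Ioo a b := by
      rcases le_total b d with h | h
      · rw [min_eq_left h]; constructor <;> linarith
      · rw [min_eq_right h]; constructor <;> linarith
    have hz' : (a + min b d) / 2 ∈ Ioo a d := by
      rcases le_total b d with h | h
      · rw [min_eq_left h]; constructor <;> linarith
      · rw [min_eq_right h]; constructor <;> linarith
    exact hdisj _ hz hz'
  · -- c < a : show d ≤ a
    have hda : d ≤ a := by
      by_contra hc
      push_neg at hc
      have hz' : (a + min b d) / 2 ∈ Ioo c d := by
        rcases le_total b d with h | h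
        · rw [min_eq_left h]; constructor <;> linarith
        · rw [min_eq_right h]; constructor <;> linarith
      have hz : (a + min b d) / 2 ∈ Ioo a b := by
        rcases le_total b d with h | h
        · rw [min_eq_left h]; constructor <;> linarith
        · rw [min_eq_right h]; constructor <;> linarith
      exact hdisj _ hz hz'
    rw [abs_of_pos (by linarith)]
    linarith

lemma sep {A : Set ℝ} (hA : IsCompact A) {κ : ℝ} (hκ : 0 < κ) (e l : ℕ → ℝ)
    (hg : ∀ i, IsGap A (Ioo (e i) (l i))) (he : ∀ i, e i ∈ A)
    (hlen : ∀ i, κ ≤ l i - e i)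
    (hne : ∀ i j, i ≠ j → ¬(e i = e j ∧ l i = l j)) : False := by
  obtain ⟨x, _, ψ, hψ, hconv⟩ := hA.tendsto_subseq he
  have hcauchy : ∀ᶠ n in atTop, dist (e (ψ n)) x < κ / 2 :=
    (Metric.tendsto_nhds.1 hconv) (κ / 2) (by linarith)
  obtain ⟨N, hN⟩ := hcauchy.exists_forall_of_atTop
  have hlt : e (ψ N) < l (ψ N) := by have := hlen (ψ N); linarith
  have hlt' : e (ψ (N + 1)) < l (ψ (N + 1)) := by have := hlen (ψ (N + 1)); linarith
  have hIne : Ioo (e (ψ N)) (l (ψ N)) ≠ Ioo (e (ψ (N + 1))) (l (ψ (N + 1))) := by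
    intro hcon
    exact hne (ψ N) (ψ (N + 1)) (hψ.injective.ne (by omega)) (Ioo_eq_iff hlt hcon)
  have hsep := gap_sep (hg (ψ N)) (hg (ψ (N + 1))) hlt hlt' hIne (hlen _) (hlen _)
  have d1 := hN N (le_refl N)
  have d2 := hN (N + 1) (by omega)
  rw [Real.dist_eq] at d1 d2
  have : |e (ψ N) - e (ψ (N + 1))| < κ := by
    rw [abs_sub_lt_iff] at *
    constructor <;> [linarith [d1.1, d2.2]; linarith [d1.2, d2.1]]
  linarith [le_trans hsep (le_of_lt this)]

lemma setDist_Ioo_le {p q c δ₀ : ℝ} {T : Set ℝ} (hpq : p < q) (hqc : q ≤ c)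
    (hδ₀ : 0 < δ₀) (hT : ∀ δ, 0 < δ → δ < δ₀ → c + δ ∈ T) :
    setDist (Ioo p q) T ≤ c - q := by
  apply setDist_le_of_forall
  intro ε hε
  set δ := min (min (ε / 2) (δ₀ / 2)) ((q - p) / 2) with hδdef
  have hδpos : 0 < δ := by
    apply lt_min (lt_min (by linarith) (by linarith)) (by linarith)
  have hδ1 : δ ≤ ε / 2 := le_trans (min_le_left _ _) (min_le_left _ _)
  have hδ2 : δ < δ₀ := lt_of_le_of_lt (le_trans (min_le_left _ _) (min_le_right _ _)) (by linarith)
  have hδ3 : δ < q - p := lt_of_le_of_lt (min_le_right _ _) (by linarith)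
  refine ⟨q - δ, ⟨by linarith, by linarith⟩, c + δ, hT δ hδpos hδ2, ?_⟩
  rw [Real.dist_eq, abs_of_nonpos (by linarith)]
  linarith

lemma setDist_Ioo_le' {r s c δ₀ : ℝ} {T : Set ℝ} (hrs : r < s) (hcr : c ≤ r)
    (hδ₀ : 0 < δ₀) (hT : ∀ δ, 0 < δ → δ < δ₀ → c - δ ∈ T) :
    setDist (Ioo r s) T ≤ r - c := by
  apply setDist_le_of_forall
  intro ε hε
  set δ := min (min (ε / 2) (δ₀ / 2)) ((s - r) / 2) with hδdef
  have hδpos : 0 < δ := by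
    apply lt_min (lt_min (by linarith) (by linarith)) (by linarith)
  have hδ1 : δ ≤ ε / 2 := le_trans (min_le_left _ _) (min_le_left _ _)
  have hδ2 : δ < δ₀ := lt_of_le_of_lt (le_trans (min_le_left _ _) (min_le_right _ _)) (by linarith)
  have hδ3 : δ < s - r := lt_of_le_of_lt (min_le_right _ _) (by linarith)
  refine ⟨r + δ, ⟨by linarith, by linarith⟩, c - δ, hT δ hδpos hδ2, ?_⟩
  rw [Real.dist_eq, abs_of_nonneg (by linarith)]
  linarith

lemma step0 {A B : Set ℝ} (hA : IsCompact A) (hB : IsCompact B)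
    (hd : ∀ x, x ∈ A → x ∉ B) (hτ : 1 ≤ thickness A * thickness B)
    {p q r s : ℝ} (hG : IsGap A (Ioo p q)) (hH : IsGap B (Ioo r s))
    (hp : p ∈ A) (hq : q ∈ A) (hr : r ∈ B) (hs : s ∈ B)
    (h1 : p < r) (h2 : r < q) (h3 : q < s) :
    (∃ p' q', IsGap A (Ioo p' q') ∧ p' ∈ A ∧ q' ∈ A ∧ q' - p' < q - p ∧
      r < p' ∧ p' < s ∧ s < q')
  ∨ (∃ r' s', IsGap B (Ioo r' s') ∧ r' ∈ B ∧ s' ∈ B ∧ s' - r' < s - r ∧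
      r' < p ∧ p < s' ∧ s' < q) := by
  have hpq : p < q := h1.trans h2
  have hrs : r < s := h2.trans h3
  have hbG : thickness A * (q - p) ≤ bridgeLength A (Ioo p q) := by
    have h := thickness_le hG (Metric.isBounded_Ioo p q) (nonempty_Ioo.2 hpq)
    rw [Real.diam_Ioo hpq.le] at h
    calc thickness A * (q - p) ≤ (bridgeLength A (Ioo p q) / (q - p)) * (q - p) :=
          mul_le_mul_of_nonneg_right h (by linarith)
      _ = bridgeLength A (Ioo p q) := div_mul_cancel₀ _ (by linarith)
  have hbH : thickness B * (s - r) ≤ bridgeLength B (Ioo r s) := by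
    have h := thickness_le hH (Metric.isBounded_Ioo r s) (nonempty_Ioo.2 hrs)
    rw [Real.diam_Ioo hrs.le] at h
    calc thickness B * (s - r) ≤ (bridgeLength B (Ioo r s) / (s - r)) * (s - r) :=
          mul_le_mul_of_nonneg_right h (by linarith)
      _ = bridgeLength B (Ioo r s) := div_mul_cancel₀ _ (by linarith)
  have hkey : ¬(bridgeLength A (Ioo p q) ≤ s - q ∧ bridgeLength B (Ioo r s) ≤ r - p) := by
    rintro ⟨k1, k2⟩
    have tA := thickness_nonneg A
    have tB := thickness_nonneg B
    have e1 : thickness A * (q - p) ≤ s - q := le_trans hbG k1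
    have e2 : thickness B * (s - r) ≤ r - p := le_trans hbH k2
    have h5 : (thickness A * (q - p)) * (thickness B * (s - r)) ≤ (s - q) * (r - p) :=
      mul_le_mul e1 e2 (mul_nonneg tB (by linarith)) (by linarith)
    have h6 : (q - p) * (s - r) * 1 ≤ (q - p) * (s - r) * (thickness A * thickness B) :=
      mul_le_mul_of_nonneg_left hτ
        (le_of_lt (mul_pos (by linarith) (by linarith)))
    have h7 : (s - q) * (r - p) < (s - r) * (q - p) :=
      mul_lt_mul'' (by linarith) (by linarith) (by linarith) (by linarith)
    nlinarith [h5, h6, h7]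
  rcases lt_or_ge (s - q) (bridgeLength A (Ioo p q)) with hcase | hcase
  · -- branch 1 : work to the right, find new A-gap containing s
    left
    have hsA : s ∉ A := fun h => hd s h hs
    have h1' : (A ∩ Iic s).Nonempty := ⟨q, hq, h3.le⟩
    have hPq : q ≤ sSup (A ∩ Iic s) := le_csSup ⟨s, fun y hy => hy.2⟩ ⟨hq, h3.le⟩
    have hPles : sSup (A ∩ Iic s) ≤ s := csSup_le h1' fun y hy => hy.2
    rcases eq_empty_or_nonempty (A ∩ Ici s) with hemp | h2'
    · exfalso
      obtain ⟨hPA, hPs, hsub⟩ := comp_unbdd_right hA.isClosed hsA h1' hemp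
      have hgap' : IsGap A (connectedComponentIn Aᶜ s) := ⟨s, hsA, rfl⟩
      have hne : connectedComponentIn Aᶜ s ≠ Ioo p q := by
        intro hcon
        have hsm : s ∈ Ioo p q := hcon ▸ mem_connectedComponentIn hsA
        exact absurd hsm.2 (by linarith)
      have hnb : ¬ Bornology.IsBounded (connectedComponentIn Aᶜ s) := by
        intro hb
        exact not_bddAbove_Ioi (a := sSup (A ∩ Iic s)) ((hb.subset hsub).bddAbove)
      have hle := bridgeLength_le hgap' hne (Or.inl hnb)
      have hsd : setDist (Ioo p q) (connectedComponentIn Aᶜ s) ≤ sSup (A ∩ Iic s) - q :=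
        setDist_Ioo_le hpq hPq one_pos (fun δ h0 _ => hsub (by simp; linarith))
      linarith
    · obtain ⟨hPA, hQA, hPs, hsQ, hcomp⟩ := comp_eq hA.isClosed hsA h1' h2'
      set P := sSup (A ∩ Iic s) with hP
      set Q := sInf (A ∩ Ici s) with hQ
      have hgap' : IsGap A (Ioo P Q) := ⟨s, hsA, hcomp.symm⟩
      have hnePQ : Ioo P Q ≠ Ioo p q := by
        intro hcon
        have hsm : s ∈ Ioo p q := hcon ▸ (⟨hPs, hsQ⟩ : s ∈ Ioo P Q)
        exact absurd hsm.2 (by linarith)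
      have hlen : Q - P < q - p := by
        by_contra hcon
        push_neg at hcon
        have hqual : Metric.diam (Ioo p q) ≤ Metric.diam (Ioo P Q) := by
          rw [Real.diam_Ioo hpq.le, Real.diam_Ioo (by linarith : P ≤ Q)]; linarith
        have hle := bridgeLength_le hgap' hnePQ (Or.inr hqual)
        have hsd : setDist (Ioo p q) (Ioo P Q) ≤ P - q :=
          setDist_Ioo_le hpq hPq (by linarith : (0:ℝ) < Q - P)
            (fun δ h0 hδ => ⟨by linarith, by linarith⟩)
        linarith
      exact ⟨P, Q, hgap', hPA, hQA, hlen, by linarith, hPs, hsQ⟩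
  · -- branch 2 : work to the left, find new B-gap containing p
    right
    have hcase2 : r - p < bridgeLength B (Ioo r s) := by
      by_contra hcon
      push_neg at hcon
      exact hkey ⟨hcase, hcon⟩
    have hpB : p ∉ B := hd p hp
    have h2'' : (B ∩ Ici p).Nonempty := ⟨r, hr, h1.le⟩
    have hQ'r : sInf (B ∩ Ici p) ≤ r := csInf_le ⟨p, fun y hy => hy.2⟩ ⟨hr, h1.le⟩
    have hpQ' : p ≤ sInf (B ∩ Ici p) := le_csInf h2'' fun y hy => hy.2
    rcases eq_empty_or_nonempty (B ∩ Iic p) with hemp | h1''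
    · exfalso
      obtain ⟨hQB, hpQ, hsub⟩ := comp_unbdd_left hB.isClosed hpB h2'' hemp
      have hgap' : IsGap B (connectedComponentIn Bᶜ p) := ⟨p, hpB, rfl⟩
      have hne : connectedComponentIn Bᶜ p ≠ Ioo r s := by
        intro hcon
        have hpm : p ∈ Ioo r s := hcon ▸ mem_connectedComponentIn hpB
        exact absurd hpm.1 (by linarith)
      have hnb : ¬ Bornology.IsBounded (connectedComponentIn Bᶜ p) := by
        intro hb
        exact not_bddBelow_Iio (a := sInf (B ∩ Ici p)) ((hb.subset hsub).bddBelow)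
      have hle := bridgeLength_le hgap' hne (Or.inl hnb)
      have hsd : setDist (Ioo r s) (connectedComponentIn Bᶜ p) ≤ r - sInf (B ∩ Ici p) :=
        setDist_Ioo_le' hrs hQ'r one_pos (fun δ h0 _ => hsub (by simp; linarith))
      linarith
    · obtain ⟨hP'B, hQ'B, hP'p, hpQ', hcomp⟩ := comp_eq hB.isClosed hpB h1'' h2''
      set P' := sSup (B ∩ Iic p) with hP'
      set Q' := sInf (B ∩ Ici p) with hQ'd
      have hgap' : IsGap B (Ioo P' Q') := ⟨p, hpB, hcomp.symm⟩
      have hneP'Q' : Ioo P' Q' ≠ Ioo r s := by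
        intro hcon
        have hpm : p ∈ Ioo r s := hcon ▸ (⟨hP'p, hpQ'⟩ : p ∈ Ioo P' Q')
        exact absurd hpm.1 (by linarith)
      have hlen : Q' - P' < s - r := by
        by_contra hcon
        push_neg at hcon
        have hqual : Metric.diam (Ioo r s) ≤ Metric.diam (Ioo P' Q') := by
          rw [Real.diam_Ioo hrs.le, Real.diam_Ioo (by linarith : P' ≤ Q')]; linarith
        have hle := bridgeLength_le hgap' hneP'Q' (Or.inr hqual)
        have hsd : setDist (Ioo r s) (Ioo P' Q') ≤ r - Q' :=
          setDist_Ioo_le' hrs hQ'r (by linarith : (0:ℝ) < Q' - P')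
            (fun δ h0 hδ => ⟨by linarith, by linarith⟩)
        linarith
      exact ⟨P', Q', hgap', hP'B, hQ'B, hlen, hP'p, hpQ', by linarith⟩

lemma subl {C : Set ℝ} (hC : IsCompact C) (u v : ℕ → ℝ)
    (hg : ∀ n, IsGap C (Ioo (u n) (v n))) (hu : ∀ n, u n ∈ C) (hlt : ∀ n, u n < v n)
    (hstep : ∀ n, (u (n+1) = u n ∧ v (n+1) = v n) ∨ v (n+1) - u (n+1) < v n - u n)
    (hfreq : ∃ᶠ n in atTop, ¬(u (n+1) = u n ∧ v (n+1) = v n)) :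
    Tendsto (fun n => v n - u n) atTop (𝓝 0) := by
  set len := fun n => v n - u n with hlen
  have hanti : Antitone len := antitone_nat_of_succ_le (fun n => by
    rcases hstep n with ⟨e1, e2⟩ | h
    · simp [hlen, e1, e2]
    · exact le_of_lt h)
  have hbdd : BddBelow (range len) := ⟨0, by
    rintro x ⟨n, rfl⟩; have := hlt n; simp only [hlen]; linarith⟩
  have hconv : Tendsto len atTop (𝓝 (⨅ n, len n)) := tendsto_atTop_ciInf hanti hbdd
  have hκ0 : (⨅ n, len n) = 0 := by
    rcases lt_trichotomy (⨅ n, len n) 0 with h | h | h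
    · exfalso
      have h0 : (0:ℝ) ≤ ⨅ n, len n :=
        le_ciInf (fun n => by have := hlt n; simp only [hlen]; linarith)
      linarith
    · exact h
    · exfalso
      obtain ⟨φ, hφ, hφP⟩ := Filter.extraction_of_frequently_atTop hfreq
      have hdec : ∀ i, len (φ i + 1) < len (φ i) := fun i => by
        rcases hstep (φ i) with hcon | hl
        · exact absurd hcon (hφP i)
        · exact hl
      have hmono : ∀ i j, i < j → len (φ j) < len (φ i) := fun i j hij =>
        lt_of_le_of_lt (hanti (Nat.succ_le_of_lt (hφ hij))) (hdec i)
      refine sep hC h (u ∘ φ) (v ∘ φ) (fun i => hg (φ i)) (fun i => hu (φ i))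
        (fun i => ciInf_le hbdd (φ i)) (fun i j hij hcon => ?_)
      have heq : len (φ i) = len (φ j) := by
        simp only [hlen, Function.comp] at hcon ⊢
        rw [hcon.1, hcon.2]
      rcases hij.lt_or_gt with hlt' | hlt'
      · exact absurd heq (ne_of_gt (hmono i j hlt'))
      · exact absurd heq (ne_of_lt (hmono j i hlt'))
  rwa [hκ0] at hconv

lemma endpoint {C : Set ℝ} (hC : IsCompact C) (u v : ℕ → ℝ) {w : ℝ}
    (hu : ∀ n, u n ∈ C)
    (hlen : Tendsto (fun n => v n - u n) atTop (𝓝 0))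
    (hfw : ∃ᶠ n in atTop, w ∈ Ioo (u n) (v n)) : w ∈ C := by
  rw [← hC.isClosed.closure_eq]
  apply Metric.mem_closure_iff.2
  intro ε hε
  have hev : ∀ᶠ n in atTop, dist (v n - u n) 0 < ε := (Metric.tendsto_nhds.mp hlen) ε hε
  obtain ⟨n, hmem, hdn⟩ := (hfw.and_eventually hev).exists
  refine ⟨u n, hu n, ?_⟩
  rw [Real.dist_eq, sub_zero] at hdn
  have h3 : v n - u n < ε := lt_of_abs_lt hdn
  rw [Real.dist_eq, abs_of_pos (by linarith [hmem.1])]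
  linarith [hmem.1, hmem.2]

def Conf (A B : Set ℝ) (z : ℝ × ℝ × ℝ × ℝ) : Prop :=
  IsGap A (Ioo z.1 z.2.1) ∧ IsGap B (Ioo z.2.2.1 z.2.2.2) ∧
  z.1 ∈ A ∧ z.2.1 ∈ A ∧ z.2.2.1 ∈ B ∧ z.2.2.2 ∈ B ∧
  ((z.1 < z.2.2.1 ∧ z.2.2.1 < z.2.1 ∧ z.2.1 < z.2.2.2) ∨
   (z.2.2.1 < z.1 ∧ z.1 < z.2.2.2 ∧ z.2.2.2 < z.2.1))

lemma stepConf {A B : Set ℝ} (hA : IsCompact A) (hB : IsCompact B)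
    (hd : ∀ x, x ∈ A → x ∉ B) (hτ : 1 ≤ thickness A * thickness B) :
    ∀ z, Conf A B z → ∃ y, Conf A B y ∧
      ((y.1 = z.1 ∧ y.2.1 = z.2.1 ∧ y.2.2.2 - y.2.2.1 < z.2.2.2 - z.2.2.1) ∨
       (y.2.2.1 = z.2.2.1 ∧ y.2.2.2 = z.2.2.2 ∧ y.2.1 - y.1 < z.2.1 - z.1)) := by
  rintro ⟨ap, aq, bp, bq⟩ ⟨hGa, hGb, hapA, haqA, hbpB, hbqB, hor⟩
  have hd' : ∀ x, x ∈ B → x ∉ A := fun x hxB hxA => hd x hxA hxB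
  have hτ' : 1 ≤ thickness B * thickness A := by rwa [mul_comm]
  rcases hor with ⟨o1, o2, o3⟩ | ⟨o1, o2, o3⟩
  · rcases step0 hA hB hd hτ hGa hGb hapA haqA hbpB hbqB o1 o2 o3 with
      ⟨p', q', hgap, hp'A, hq'A, hl, c1, c2, c3⟩ | ⟨r', s', hgap, hr'B, hs'B, hl, c1, c2, c3⟩
    · exact ⟨(p', q', bp, bq), ⟨hgap, hGb, hp'A, hq'A, hbpB, hbqB,
        Or.inr ⟨c1, c2, c3⟩⟩, Or.inr ⟨rfl, rfl, hl⟩⟩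
    · exact ⟨(ap, aq, r', s'), ⟨hGa, hgap, hapA, haqA, hr'B, hs'B,
        Or.inr ⟨c1, c2, c3⟩⟩, Or.inl ⟨rfl, rfl, hl⟩⟩
  · rcases step0 hB hA hd' hτ' hGb hGa hbpB hbqB hapA haqA o1 o2 o3 with
      ⟨p', q', hgap, hp'B, hq'B, hl, c1, c2, c3⟩ | ⟨r', s', hgap, hr'A, hs'A, hl, c1, c2, c3⟩
    · exact ⟨(ap, aq, p', q'), ⟨hGa, hgap, hapA, haqA, hp'B, hq'B,
        Or.inl ⟨c1, c2, c3⟩⟩, Or.inl ⟨rfl, rfl, hl⟩⟩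
    · exact ⟨(r', s', bp, bq), ⟨hgap, hGb, hr'A, hs'A, hbpB, hbqB,
        Or.inl ⟨c1, c2, c3⟩⟩, Or.inr ⟨rfl, rfl, hl⟩⟩

lemma main {A B : Set ℝ} (hA : IsCompact A) (hB : IsCompact B)
    (hd : ∀ x, x ∈ A → x ∉ B) (hτ : 1 ≤ thickness A * thickness B)
    {z0 : ℝ × ℝ × ℝ × ℝ} (h0 : Conf A B z0) : False := by
  have hstep := stepConf hA hB hd hτ
  choose! g hg1 hg2 using hstep
  set f : ℕ → ℝ × ℝ × ℝ × ℝ := fun n => g^[n] z0 with hf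
  have hfsucc : ∀ n, f (n + 1) = g (f n) := fun n => Function.iterate_succ_apply' g n z0
  have hfC : ∀ n, Conf A B (f n) := by
    intro n
    induction n with
    | zero => simpa [hf] using h0
    | succ n ih => rw [hfsucc]; exact hg1 _ ih
  have hfD : ∀ n,
      ((f (n+1)).1 = (f n).1 ∧ (f (n+1)).2.1 = (f n).2.1 ∧
        (f (n+1)).2.2.2 - (f (n+1)).2.2.1 < (f n).2.2.2 - (f n).2.2.1) ∨
      ((f (n+1)).2.2.1 = (f n).2.2.1 ∧ (f (n+1)).2.2.2 = (f n).2.2.2 ∧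
        (f (n+1)).2.1 - (f (n+1)).1 < (f n).2.1 - (f n).1) := fun n => by
    rw [hfsucc n]; exact hg2 _ (hfC n)
  set ua : ℕ → ℝ := fun n => (f n).1 with hua
  set va : ℕ → ℝ := fun n => (f n).2.1 with hva
  set ub : ℕ → ℝ := fun n => (f n).2.2.1 with hub
  set vb : ℕ → ℝ := fun n => (f n).2.2.2 with hvb
  have hor : ∀ n, (ua n < ub n ∧ ub n < va n ∧ va n < vb n) ∨
      (ub n < ua n ∧ ua n < vb n ∧ vb n < va n) := fun n => (hfC n).2.2.2.2.2.2
  have hga : ∀ n, IsGap A (Ioo (ua n) (va n)) := fun n => (hfC n).1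
  have hgb : ∀ n, IsGap B (Ioo (ub n) (vb n)) := fun n => (hfC n).2.1
  have huaA : ∀ n, ua n ∈ A := fun n => (hfC n).2.2.1
  have hvaA : ∀ n, va n ∈ A := fun n => (hfC n).2.2.2.1
  have hubB : ∀ n, ub n ∈ B := fun n => (hfC n).2.2.2.2.1
  have hvbB : ∀ n, vb n ∈ B := fun n => (hfC n).2.2.2.2.2.1
  have hlta : ∀ n, ua n < va n := fun n => by
    rcases hor n with ⟨x1, x2, _⟩ | ⟨x1, x2, x3⟩ <;> linarith
  have hltb : ∀ n, ub n < vb n := fun n => by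
    rcases hor n with ⟨x1, x2, x3⟩ | ⟨x1, x2, _⟩ <;> linarith
  have hstepA : ∀ n, (ua (n+1) = ua n ∧ va (n+1) = va n) ∨
      va (n+1) - ua (n+1) < va n - ua n := fun n => by
    rcases hfD n with ⟨e1, e2, _⟩ | ⟨_, _, hl⟩
    · exact Or.inl ⟨e1, e2⟩
    · exact Or.inr hl
  have hstepB : ∀ n, (ub (n+1) = ub n ∧ vb (n+1) = vb n) ∨
      vb (n+1) - ub (n+1) < vb n - ub n := fun n => by
    rcases hfD n with ⟨_, _, hl⟩ | ⟨e1, e2, _⟩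
    · exact Or.inr hl
    · exact Or.inl ⟨e1, e2⟩
  have hshort : ∀ n, vb (n+1) - ub (n+1) < vb n - ub n ∨
      va (n+1) - ua (n+1) < va n - ua n := fun n => by
    rcases hfD n with ⟨_, _, hl⟩ | ⟨_, _, hl⟩
    · exact Or.inl hl
    · exact Or.inr hl
  by_cases hPA : ∃ᶠ n in atTop, ¬(ua (n+1) = ua n ∧ va (n+1) = va n)
  · by_cases hPB : ∃ᶠ n in atTop, ¬(ub (n+1) = ub n ∧ vb (n+1) = vb n)
    · -- both gap lengths tend to zero
      have hta := subl hA ua va hga huaA hlta hstepA hPA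
      have htb := subl hB ub vb hgb hubB hltb hstepB hPB
      have hdist : ∀ n, |ua n - ub n| ≤ (va n - ua n) + (vb n - ub n) := fun n => by
        rcases hor n with ⟨x1, x2, x3⟩ | ⟨x1, x2, x3⟩ <;>
          (apply abs_le.2; constructor <;> linarith)
      obtain ⟨x, hxA, φ, hφ, hconva⟩ := hA.tendsto_subseq huaA
      have hzero : Tendsto (fun n => ua (φ n) - ub (φ n)) atTop (𝓝 0) := by
        apply squeeze_zero_norm (fun n => hdist (φ n))
        have := (hta.comp hφ.tendsto_atTop).add (htb.comp hφ.tendsto_atTop)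
        simpa using this
      have hconvb : Tendsto (fun n => ub (φ n)) atTop (𝓝 x) := by
        have := hconva.sub hzero
        simpa using this
      have hxB : x ∈ B := hB.isClosed.mem_of_tendsto hconvb
        (Filter.Eventually.of_forall fun n => hubB (φ n))
      exact hd x hxA hxB
    · -- B-gap eventually constant
      rw [Filter.not_frequently] at hPB
      simp only [not_not] at hPB
      obtain ⟨N, hN⟩ := hPB.exists_forall_of_atTop
      have hconst : ∀ n, N ≤ n → ub n = ub N ∧ vb n = vb N := by
        intro n hn
        induction n, hn using Nat.le_induction with
        | base => exact ⟨rfl, rfl⟩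
        | succ n hn ih =>
          have := hN n hn
          exact ⟨this.1.trans ih.1, this.2.trans ih.2⟩
      have hta := subl hA ua va hga huaA hlta hstepA hPA
      have hw : ∀ n, N ≤ n → ub N ∈ Ioo (ua n) (va n) ∨ vb N ∈ Ioo (ua n) (va n) := by
        intro n hn
        obtain ⟨e1, e2⟩ := hconst n hn
        rcases hor n with ⟨x1, x2, x3⟩ | ⟨x1, x2, x3⟩
        · exact Or.inl (by rw [← e1]; exact ⟨x1, x2⟩)
        · exact Or.inr (by rw [← e2]; exact ⟨x2, x3⟩)
      have hfreq : (∃ᶠ n in atTop, ub N ∈ Ioo (ua n) (va n)) ∨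
          (∃ᶠ n in atTop, vb N ∈ Ioo (ua n) (va n)) := by
        rw [← Filter.frequently_or_distrib]
        exact ((eventually_atTop.2 ⟨N, hw⟩).frequently)
      rcases hfreq with hf' | hf'
      · exact hd (ub N) (endpoint hA ua va huaA hta hf') (hubB N)
      · exact hd (vb N) (endpoint hA ua va huaA hta hf') (hvbB N)
  · -- A-gap eventually constant
    rw [Filter.not_frequently] at hPA
    simp only [not_not] at hPA
    obtain ⟨N, hN⟩ := hPA.exists_forall_of_atTop
    have hconst : ∀ n, N ≤ n → ua n = ua N ∧ va n = va N := by
      intro n hn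
      induction n, hn using Nat.le_induction with
      | base => exact ⟨rfl, rfl⟩
      | succ n hn ih =>
        have := hN n hn
        exact ⟨this.1.trans ih.1, this.2.trans ih.2⟩
    have hfreqB : ∃ᶠ n in atTop, ¬(ub (n+1) = ub n ∧ vb (n+1) = vb n) := by
      rw [Filter.frequently_atTop]
      intro m
      refine ⟨max N m, le_max_right _ _, fun hcon => ?_⟩
      rcases hshort (max N m) with hl | hl
      · rw [hcon.1, hcon.2] at hl; linarith
      · have e1 := (hN (max N m) (le_max_left _ _)).1
        have e2 := (hN (max N m) (le_max_left _ _)).2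
        rw [e1, e2] at hl; linarith
    have htb := subl hB ub vb hgb hubB hltb hstepB hfreqB
    have hw : ∀ n, N ≤ n → ua N ∈ Ioo (ub n) (vb n) ∨ va N ∈ Ioo (ub n) (vb n) := by
      intro n hn
      obtain ⟨e1, e2⟩ := hconst n hn
      rcases hor n with ⟨x1, x2, x3⟩ | ⟨x1, x2, x3⟩
      · exact Or.inr (by rw [← e2]; exact ⟨x2, x3⟩)
      · exact Or.inl (by rw [← e1]; exact ⟨x1, x2⟩)
    have hfreq : (∃ᶠ n in atTop, ua N ∈ Ioo (ub n) (vb n)) ∨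
        (∃ᶠ n in atTop, va N ∈ Ioo (ub n) (vb n)) := by
      rw [← Filter.frequently_or_distrib]
      exact ((eventually_atTop.2 ⟨N, hw⟩).frequently)
    rcases hfreq with hf' | hf'
    · exact hd (ua N) (huaA N) (endpoint hB ub vb hubB htb hf')
    · exact hd (va N) (hvaA N) (endpoint hB ub vb hubB htb hf')

lemma init {A B : Set ℝ} (hA : IsCompact A) (hB : IsCompact B)
    (hAne : A.Nonempty) (hBne : B.Nonempty)
    (hd : ∀ x, x ∈ A → x ∉ B)
    (hBA : ¬∃ I, IsGap A I ∧ B ⊆ I) (hAB : ¬∃ I, IsGap B I ∧ A ⊆ I)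
    (hab : sSup A < sSup B) :
    ∃ z, Conf A B z := by
  have haA : sSup A ∈ A := hA.sSup_mem hAne
  have hbB : sSup B ∈ B := hB.sSup_mem hBne
  set a := sSup A with hadef
  set b := sSup B with hbdef
  have haB : a ∉ B := hd a haA
  have hAle : ∀ y ∈ A, y ≤ a := fun y hy => le_csSup hA.bddAbove hy
  -- B has points below a
  have h1 : (B ∩ Iic a).Nonempty := by
    by_contra hc
    rw [Set.not_nonempty_iff_eq_empty] at hc
    have hBsub : B ⊆ Ioi a := by
      intro y hy
      by_contra hy'
      simp only [mem_Ioi, not_lt] at hy'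
      have hmm : y ∈ B ∩ Iic a := ⟨hy, hy'⟩
      rw [hc] at hmm; exact hmm
    have hIoi : Ioi a ⊆ Aᶜ := fun y hy hyA => absurd (hAle y hyA) (not_le.2 hy)
    have hbA : b ∉ A := fun h => absurd (hAle b h) (not_le.2 hab)
    refine hBA ⟨connectedComponentIn Aᶜ b, ⟨b, hbA, rfl⟩, ?_⟩
    exact fun y hy => isPreconnected_Ioi.subset_connectedComponentIn (hBsub hbB) hIoi (hBsub hy)
  have h2 : (B ∩ Ici a).Nonempty := ⟨b, hbB, hab.le⟩
  obtain ⟨hrB, hsB, hra, has, hcompB⟩ := comp_eq hB.isClosed haB h1 h2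
  set r := sSup (B ∩ Iic a) with hrdef
  set s := sInf (B ∩ Ici a) with hsdef
  have hHgap : IsGap B (Ioo r s) := ⟨a, haB, hcompB.symm⟩
  have hsb : s ≤ b := csInf_le ⟨a, fun y hy => hy.2⟩ ⟨hbB, hab.le⟩
  have hrA : r ∉ A := fun h => hd r h hrB
  -- A has points below r
  have h1' : (A ∩ Iic r).Nonempty := by
    by_contra hc
    rw [Set.not_nonempty_iff_eq_empty] at hc
    have hAsub : A ⊆ Ioo r s := by
      intro y hy
      constructor
      · by_contra hy'
        simp only [mem_Ioi, not_lt] at hy'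
        have hmm : y ∈ A ∩ Iic r := ⟨hy, hy'⟩
        rw [hc] at hmm; exact hmm
      · exact lt_of_le_of_lt (hAle y hy) has
    exact hAB ⟨Ioo r s, hHgap, hAsub⟩
  have h2' : (A ∩ Ici r).Nonempty := ⟨a, haA, hra.le⟩
  obtain ⟨hpA, hqA, hpr, hrq, hcompA⟩ := comp_eq hA.isClosed hrA h1' h2'
  set p := sSup (A ∩ Iic r) with hpdef
  set q := sInf (A ∩ Ici r) with hqdef
  have hGgap : IsGap A (Ioo p q) := ⟨r, hrA, hcompA.symm⟩
  have hqa : q ≤ a := csInf_le ⟨r, fun y hy => hy.2⟩ ⟨haA, hra.le⟩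
  have hqs : q < s := lt_of_le_of_lt hqa has
  exact ⟨(p, q, r, s), hGgap, hHgap, hpA, hqA, hrB, hsB, Or.inl ⟨hpr, hrq, hqs⟩⟩


/-- Newhouse's Gap Lemma: if `τ(K)·τ(L) ≥ 1`, then either `K` lies in a single gap of `L`,
or `L` lies in a single gap of `K`, or `K` and `L` intersect. -/
theorem newhouse_gap_lemma (K L : Set ℝ) (hK : IsCantorSet K) (hL : IsCantorSet L)
    (h : 1 ≤ thickness K * thickness L) :
    (∃ I, IsGap L I ∧ K ⊆ I) ∨ (∃ I, IsGap K I ∧ L ⊆ I) ∨ (K ∩ L).Nonempty := by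
  obtain ⟨hKne, hKc, -, -⟩ := hK
  obtain ⟨hLne, hLc, -, -⟩ := hL
  by_contra hcon
  push_neg at hcon
  obtain ⟨hKL, hLK, hint⟩ := hcon
  have hd : ∀ x, x ∈ K → x ∉ L := fun x hxK hxL => by
    have : x ∈ K ∩ L := ⟨hxK, hxL⟩
    rw [hint] at this; exact this
  have hd' : ∀ x, x ∈ L → x ∉ K := fun x hxL hxK => hd x hxK hxL
  have hLK' : ¬∃ I, IsGap K I ∧ L ⊆ I := by rintro ⟨I, hI, hsub⟩; exact hLK I hI hsub
  have hKL' : ¬∃ I, IsGap L I ∧ K ⊆ I := by rintro ⟨I, hI, hsub⟩; exact hKL I hI hsub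
  have h' : 1 ≤ thickness L * thickness K := by rwa [mul_comm]
  rcases lt_trichotomy (sSup K) (sSup L) with hcmp | hcmp | hcmp
  · obtain ⟨z, hz⟩ := init hKc hLc hKne hLne hd hLK' hKL' hcmp
    exact main hKc hLc hd h hz
  · exact hd (sSup K) (hKc.sSup_mem hKne) (hcmp ▸ hLc.sSup_mem hLne)
  · obtain ⟨z, hz⟩ := init hLc hKc hLne hKne hd' hKL' hLK' hcmp
    exact main hLc hKc hd' h' hz
end
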